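/- There is no well-formed finite trace satisfying G(F u₁ ∧ F u₂) for two distinct update terms u₁, u₂ on the same stream variable, where well-formedness requires that at the final position no update term holds, and at every earlier position each variable has exactly one update. (In particular, G(F [x←y] ∧ F [x←z]) is unsatisfiable over well-formed finite traces, witnessing that TSL_f is strictly less expressive than TSL.) -/

import Mathlib

/-!
Evaluated at the last position of the trace, `G (F u₁)` forces `u₁` to hold there, while a
well-formed trace carries no update term at its last position.
-/

theorem List.mem_getD_last_of_forall_exists_mem {α : Type*} {σ : List (Set α)} (hσ : σ ≠ [])
    {a : α} (h : ∀ i, i < σ.length → ∃ j, i ≤ j ∧ j < σ.length ∧ a ∈ σ.getD j ∅) :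
    a ∈ σ.getD (σ.length - 1) ∅ := by
  have hlen : 0 < σ.length := List.length_pos_iff.mpr hσ
  obtain ⟨j, hle, hlt, ha⟩ := h (σ.length - 1) (by omega)
  obtain rfl : j = σ.length - 1 := by omega
  exact ha

theorem stmt_1_general {Term V : Type*} (isUpdate : Term → Option V)
    (x : V) (u₁ u₂ : Term)
    (h₁ : isUpdate u₁ = some x) :
    ¬ ∃ σ : List (Set Term), σ ≠ [] ∧
      -- well-formedness (1): at every non-final position, each variable has
      -- exactly one update term
      (∀ i, i < σ.length - 1 → ∀ v : V,
        ∃! t : Term, t ∈ σ.getD i ∅ ∧ isUpdate t = some v) ∧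
      -- well-formedness (2): no update term holds at the final position
      (∀ t ∈ σ.getD (σ.length - 1) ∅, isUpdate t = none) ∧
      -- (σ, 0) ⊨ G (F u₁ ∧ F u₂)
      (∀ i, i < σ.length →
        (∃ j, i ≤ j ∧ j < σ.length ∧ u₁ ∈ σ.getD j ∅) ∧
        (∃ j, i ≤ j ∧ j < σ.length ∧ u₂ ∈ σ.getD j ∅)) := by
  rintro ⟨σ, hσ, -, hlast, hG⟩
  have hu₁ := List.mem_getD_last_of_forall_exists_mem hσ fun i hi ↦ (hG i hi).1
  simp [hlast u₁ hu₁] at h₁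

/-- No well-formed finite trace satisfies G(F u₁ ∧ F u₂) for distinct update
terms u₁ ≠ u₂ on the same stream variable x.  Terms are modeled by a type
`Term` with `isUpdate : Term → Option V` tagging update terms by variable. -/
theorem stmt_1 {Term V : Type*} (isUpdate : Term → Option V)
    (x : V) (u₁ u₂ : Term) (hne : u₁ ≠ u₂)
    (h₁ : isUpdate u₁ = some x) (h₂ : isUpdate u₂ = some x) :
    ¬ ∃ σ : List (Set Term), σ ≠ [] ∧
      -- well-formedness (1): at every non-final position, each variable has
      -- exactly one update term
      (∀ i, i < σ.length - 1 → ∀ v : V,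
        ∃! t : Term, t ∈ σ.getD i ∅ ∧ isUpdate t = some v) ∧
      -- well-formedness (2): no update term holds at the final position
      (∀ t ∈ σ.getD (σ.length - 1) ∅, isUpdate t = none) ∧
      -- (σ, 0) ⊨ G (F u₁ ∧ F u₂)
      (∀ i, i < σ.length →
        (∃ j, i ≤ j ∧ j < σ.length ∧ u₁ ∈ σ.getD j ∅) ∧
        (∃ j, i ≤ j ∧ j < σ.length ∧ u₂ ∈ σ.getD j ∅)) :=
  stmt_1_general isUpdate x u₁ u₂ h₁
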